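/- arXiv:2310.19806 — 2 statements merged into one kernel-verified Lean document; each statement's English description precedes it below -/
import Mathlib

section
/- Let σ* be the transformation defined by: σ*(φ) = φ for φ an atom, ⊤, or ⊥; σ*(φ₁ ∘ φ₂) = σ*(φ₁) ∘ σ*(φ₂) for ∘ ∈ {∧,∨}; σ*(¬ψ) = ¬ψ′; σ*(φ₁→φ₂) = (σ*(φ₁)→σ*(φ₂)) ∧ (φ₁′→φ₂′), where ψ′ denotes replacing every atom p in ψ with its primed copy p′. Then an HT-interpretation ⟨H,T⟩ satisfies a formula φ in the logic of here-and-there if and only if the classical interpretation I = H ∪ T′ over the alphabet 𝒫 ∪ 𝒫′ satisfies σ*(φ). -/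
/-- Propositional formulas over atoms of type `α`. -/
inductive Form (α : Type) : Type where
  | bot  : Form α
  | top  : Form α
  | atom : α → Form α
  | neg  : Form α → Form α
  | conj : Form α → Form α → Form α
  | disj : Form α → Form α → Form α
  | impl : Form α → Form α → Form α

/-- Classical satisfaction by a valuation `I` (atom true iff it is in `I`). -/
def cSat {α : Type} (I : Set α) : Form α → Prop
  | .bot => False
  | .top => True
  | .atom a => a ∈ I
  | .neg φ => ¬ cSat I φ
  | .conj φ ψ => cSat I φ ∧ cSat I ψ
  | .disj φ ψ => cSat I φ ∨ cSat I ψ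
  | .impl φ ψ => cSat I φ → cSat I ψ

/-- Satisfaction in the logic of here-and-there by a pair `⟨H,T⟩`. -/
def htSat {α : Type} (H T : Set α) : Form α → Prop
  | .bot => False
  | .top => True
  | .atom a => a ∈ H
  | .neg φ => ¬ htSat T T φ
  | .conj φ ψ => htSat H T φ ∧ htSat H T ψ
  | .disj φ ψ => htSat H T φ ∨ htSat H T ψ
  | .impl φ ψ => (htSat H T φ → htSat H T ψ) ∧ (htSat T T φ → htSat T T ψ)

/-- Renaming of atoms in a formula. -/
def Form.map {α β : Type} (f : α → β) : Form α → Form β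
  | .bot => .bot
  | .top => .top
  | .atom a => .atom (f a)
  | .neg φ => .neg (φ.map f)
  | .conj φ ψ => .conj (φ.map f) (ψ.map f)
  | .disj φ ψ => .disj (φ.map f) (ψ.map f)
  | .impl φ ψ => .impl (φ.map f) (ψ.map f)

/-- The unprimed copy of a formula over `𝒫` in the alphabet `𝒫 ∪ 𝒫′` (modelled as `α ⊕ α`,
where `Sum.inl a` is the atom `a` and `Sum.inr a` is its primed copy `a′`). -/
def unprimed {α : Type} (φ : Form α) : Form (α ⊕ α) := φ.map Sum.inl

/-- The primed copy `φ′` of a formula over `𝒫` (every atom replaced by its primed copy). -/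
def primed {α : Type} (φ : Form α) : Form (α ⊕ α) := φ.map Sum.inr

/-- The simplified transformation `σ*`, with `σ*(¬ψ) = ¬ψ′`. -/
def sigmaStar {α : Type} : Form α → Form (α ⊕ α)
  | .bot => .bot
  | .top => .top
  | .atom a => .atom (Sum.inl a)
  | .neg ψ => .neg (primed ψ)
  | .conj φ ψ => .conj (sigmaStar φ) (sigmaStar ψ)
  | .disj φ ψ => .disj (sigmaStar φ) (sigmaStar ψ)
  | .impl φ ψ => .conj (.impl (sigmaStar φ) (sigmaStar ψ)) (.impl (primed φ) (primed ψ))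

/-- The transformation `σ`, with `σ(¬ψ) = ¬σ(ψ) ∧ ¬ψ′`. -/
def sigmaFull {α : Type} : Form α → Form (α ⊕ α)
  | .bot => .bot
  | .top => .top
  | .atom a => .atom (Sum.inl a)
  | .neg ψ => .conj (.neg (sigmaFull ψ)) (.neg (primed ψ))
  | .conj φ ψ => .conj (sigmaFull φ) (sigmaFull ψ)
  | .disj φ ψ => .disj (sigmaFull φ) (sigmaFull ψ)
  | .impl φ ψ => .conj (.impl (sigmaFull φ) (sigmaFull ψ)) (.impl (primed φ) (primed ψ))

/-- The classical interpretation `I = H ∪ T′` over `𝒫 ∪ 𝒫′` corresponding to `⟨H,T⟩`. -/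
def htToClassical {α : Type} (H T : Set α) : Set (α ⊕ α) :=
  (Sum.inl '' H) ∪ (Sum.inr '' T)

/-- `I` satisfies all axioms `p → p′` for `p ∈ 𝒫`. -/
def primeAxioms {α : Type} (I : Set (α ⊕ α)) : Prop :=
  ∀ a : α, Sum.inl a ∈ I → Sum.inr a ∈ I

/-- Logical complexity: number of occurrences of `¬, ∧, ∨, →`. -/
def lc {α : Type} : Form α → ℕ
  | .bot => 0
  | .top => 0
  | .atom _ => 0
  | .neg φ => 1 + lc φ
  | .conj φ ψ => 1 + lc φ + lc ψ
  | .disj φ ψ => 1 + lc φ + lc ψ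
  | .impl φ ψ => 1 + lc φ + lc ψ

/-- Number of implication occurrences in a formula. -/
def implCount {α : Type} : Form α → ℕ
  | .bot => 0
  | .top => 0
  | .atom _ => 0
  | .neg φ => implCount φ
  | .conj φ ψ => implCount φ + implCount ψ
  | .disj φ ψ => implCount φ + implCount ψ
  | .impl φ ψ => 1 + implCount φ + implCount ψ

/-! The primed atoms of `H ∪ T′` encode `T`, and the HT-clauses that evaluate at `⟨T,T⟩` (under `¬`
and in the second half of `→`) are classical evaluations at `T`, hence evaluations of the primed
copy in `H ∪ T′`. Everything else is evaluated at `H`, read off the unprimed atoms. -/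

theorem cSat_map {α β : Type} (f : α → β) (I : Set β) (φ : Form α) :
    cSat I (φ.map f) ↔ cSat (f ⁻¹' I) φ := by
  induction φ <;> simp_all [Form.map, cSat]

section HereAndThere

variable {α : Type} (H T : Set α)

theorem inl_preimage_htToClassical : Sum.inl ⁻¹' htToClassical H T = H := by
  ext; simp [htToClassical]

theorem inr_preimage_htToClassical : Sum.inr ⁻¹' htToClassical H T = T := by
  ext; simp [htToClassical]

theorem cSat_htToClassical_primed (φ : Form α) :
    cSat (htToClassical H T) (primed φ) ↔ cSat T φ := by
  rw [primed, cSat_map, inr_preimage_htToClassical]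

theorem htSat_self_iff_cSat (φ : Form α) : htSat T T φ ↔ cSat T φ := by
  induction φ <;> simp_all [htSat, cSat]

end HereAndThere

theorem stmt5_general {α : Type} (H T : Set α) (φ : Form α) :
    htSat H T φ ↔ cSat (htToClassical H T) (sigmaStar φ) := by
  induction φ with
  | atom a => rw [htSat, sigmaStar, cSat, ← Set.mem_preimage, inl_preimage_htToClassical]
  | neg ψ => rw [htSat, sigmaStar, cSat, cSat_htToClassical_primed, htSat_self_iff_cSat]
  | impl φ ψ ihφ ihψ =>
    simp only [htSat, sigmaStar, cSat, ihφ, ihψ, cSat_htToClassical_primed, htSat_self_iff_cSat]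
  | _ => simp_all only [htSat, sigmaStar, cSat]

theorem stmt5 {α : Type} (H T : Set α) (hHT : H ⊆ T) (φ : Form α) :
    htSat H T φ ↔ cSat (htToClassical H T) (sigmaStar φ) :=
  stmt5_general H T φ
end

section
/- For every formula φ over 𝒫 and every classical interpretation I over 𝒫 ∪ 𝒫′ satisfying all axioms p → p′, I satisfies σ(φ) if and only if I satisfies σ*(φ), where σ is defined with σ(¬ψ) = ¬σ(ψ) ∧ ¬ψ′ and σ* is the simplified version with σ*(¬ψ) = ¬ψ′ (both transformations agree on atoms, commute with ∧ and ∨, and translate φ₁→φ₂ to (·(φ₁)→·(φ₂)) ∧ (φ₁′→φ₂′)). -/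
/-! Under the axioms `p → p′`, the translation `σ(ψ)` classically entails `ψ′` (persistence from
"here" to "there"). Hence the extra conjunct `¬σ(ψ)` in `σ(¬ψ) = ¬σ(ψ) ∧ ¬ψ′` is implied by `¬ψ′`,
and `σ` and `σ*` agree by structural induction. -/

theorem cSat_primed_of_cSat_sigmaFull {α : Type} {I : Set (α ⊕ α)} (hI : primeAxioms I) :
    ∀ {φ : Form α}, cSat I (sigmaFull φ) → cSat I (primed φ)
  | .bot, h => h
  | .top, h => h
  | .atom a, h => hI a h
  | .neg _, h => h.2
  | .conj _ _, h => ⟨cSat_primed_of_cSat_sigmaFull hI h.1, cSat_primed_of_cSat_sigmaFull hI h.2⟩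
  | .disj _ _, h => h.imp (cSat_primed_of_cSat_sigmaFull hI) (cSat_primed_of_cSat_sigmaFull hI)
  | .impl _ _, h => h.2

theorem stmt8 {α : Type} (I : Set (α ⊕ α)) (hI : primeAxioms I) (φ : Form α) :
    cSat I (sigmaFull φ) ↔ cSat I (sigmaStar φ) := by
  induction φ with
  | bot | top | atom _ => rfl
  | neg _ => exact ⟨And.right, fun h => ⟨mt (cSat_primed_of_cSat_sigmaFull hI) h, h⟩⟩
  | conj _ _ ih₁ ih₂ => exact and_congr ih₁ ih₂
  | disj _ _ ih₁ ih₂ => exact or_congr ih₁ ih₂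
  | impl _ _ ih₁ ih₂ => exact and_congr (imp_congr ih₁ ih₂) Iff.rfl
end
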